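/- arXiv:2208.14840 — 13 statements merged into one kernel-verified Lean document; each statement's English description precedes it below -/
import Mathlib

section
/- Let R be a semisimple commutative ring with identity, M a nonzero prime R-module, and N a sa-small submodule of M. Then for every submodule T of M with N properly contained in T, N is a T-sa-small submodule of M. -/
open Submodule

/-- A submodule `N` of `M` is small (superfluous) in `M`: for every submodule `L`,
`N + L = M` implies `L = M`. -/
def IsSmallSubmodule {R M : Type*} [CommRing R] [AddCommGroup M] [Module R M]
    (N : Submodule R M) : Prop :=
  ∀ L : Submodule R M, N ⊔ L = ⊤ → L = ⊤

/-- `N` is a semiannihilator-small (sa-small) submodule of `M`: for every submodule `L`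
with `N + L = M`, the annihilator of `L` is a small ideal of `R`. -/
def IsSaSmall {R M : Type*} [CommRing R] [AddCommGroup M] [Module R M]
    (N : Submodule R M) : Prop :=
  ∀ L : Submodule R M, N ⊔ L = ⊤ → IsSmallSubmodule (Submodule.annihilator L : Ideal R)

/-- `N` is a `T`-semiannihilator-small (`T`-sa-small) submodule of `M`: for every nonzero
submodule `X` of `M` with `T ⊆ N + X`, the annihilator of `X` is contained in
`(T :_R M) = T.colon ⊤` and, viewed as a submodule of the `R`-module `(T :_R M)`, is small
in it: for every `R`-submodule `Y` of `(T :_R M)`, `Ann(X) + Y = (T :_R M)` implies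
`Y = (T :_R M)`. -/
def IsTSaSmall {R M : Type*} [CommRing R] [AddCommGroup M] [Module R M]
    (T N : Submodule R M) : Prop :=
  ∀ X : Submodule R M, X ≠ ⊥ → T ≤ N ⊔ X →
    Submodule.annihilator X ≤ T.colon ⊤ ∧
    ∀ Y : Ideal R, Y ≤ T.colon ⊤ →
      Submodule.annihilator X ⊔ Y = T.colon ⊤ → Y = T.colon ⊤

/-- Over a semisimple commutative ring `R`, if `M` is a nonzero prime module
and `N` is a sa-small submodule of `M`, then `N` is `T`-sa-small for every submodule `T`
properly containing `N`. -/
theorem isTSaSmall_of_isSaSmall_prime_semisimple {R M : Type*} [CommRing R] [Nontrivial R]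
    [IsSemisimpleRing R] [AddCommGroup M] [Module R M] [Nontrivial M]
    (hprime : ∀ K : Submodule R M, K ≠ ⊥ →
      Submodule.annihilator K = Submodule.annihilator (⊤ : Submodule R M))
    (N : Submodule R M) (hN : IsSaSmall N)
    (T : Submodule R M) (hNT : N < T) : IsTSaSmall T N := by
  have hsmall : IsSmallSubmodule (Submodule.annihilator (⊤ : Submodule R M) : Ideal R) :=
    hN ⊤ (by simp)
  have hbot : (Submodule.annihilator (⊤ : Submodule R M) : Ideal R) = ⊥ := by
    obtain ⟨c, hc⟩ := exists_isCompl (Submodule.annihilator (⊤ : Submodule R M) : Ideal R)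
    have hct : c = ⊤ := hsmall c hc.sup_eq_top
    have := hc.inf_eq_bot
    rw [hct, inf_top_eq] at this
    exact this
  intro X hX _
  have hx : Submodule.annihilator X = ⊥ := (hprime X hX).trans hbot
  rw [hx]
  exact ⟨bot_le, fun Y _ h => by rwa [bot_sup_eq] at h⟩
end

section
/- Let R be a commutative ring with identity, M an R-module, and T, T' submodules of M with T ⊊ T' ⊊ M. If N is a T-sa-small submodule of M, then N is a T'-sa-small submodule of M. -/
open Submodule

/-- If `T ⊊ T' ⊊ M` and `N` is `T`-sa-small in `M`, then `N` is
`T'`-sa-small in `M`. -/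
theorem isTSaSmall_of_lt {R M : Type*} [CommRing R] [Nontrivial R]
    [AddCommGroup M] [Module R M] (T T' N : Submodule R M)
    (hTT' : T < T') (hT' : T' < ⊤)
    (h : IsTSaSmall T N) : IsTSaSmall T' N := by
  intro X hX hTX
  obtain ⟨h1, h2⟩ := h X hX (le_trans hTT'.le hTX)
  have hcol : T.colon ⊤ ≤ T'.colon ⊤ := by
    intro r hr
    rw [Submodule.mem_colon] at hr ⊢
    exact fun p hp => hTT'.le (hr p hp)
  refine ⟨h1.trans hcol, fun Y hY hYeq => ?_⟩
  have key : Submodule.annihilator X ⊔ (Y ⊓ T.colon ⊤) = T.colon ⊤ := by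
    apply le_antisymm (sup_le h1 inf_le_right)
    intro a ha
    have hmem : a ∈ Submodule.annihilator X ⊔ Y := hYeq ▸ hcol ha
    obtain ⟨b, hb, c, hc, rfl⟩ := Submodule.mem_sup.mp hmem
    refine Submodule.mem_sup.mpr ⟨b, hb, c, ⟨hc, ?_⟩, rfl⟩
    have := Submodule.sub_mem _ ha (h1 hb)
    simpa using this
  have hTY : T.colon ⊤ ≤ Y := by
    have := h2 _ inf_le_right key
    exact this ▸ inf_le_left
  rw [← hYeq]
  exact (le_antisymm (sup_le (h1.trans hTY) le_rfl) le_sup_right).symm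
end

section
/- Let R be a commutative ring with identity, M an R-module, and N, K, T submodules of M with N ≤ K and T ≤ K. If N is a T-sa-small submodule of M, then N is a T-sa-small submodule of the R-module K. -/
open Submodule

/-- If `N ≤ K`, `T ≤ K` and `N` is `T`-sa-small in `M`, then `N` is
`T`-sa-small in the `R`-module `K` (submodules transported along `K.subtype`). -/
theorem isTSaSmall_in_submodule {R M : Type*} [CommRing R] [Nontrivial R]
    [AddCommGroup M] [Module R M] (N K T : Submodule R M)
    (hNK : N ≤ K) (hTK : T ≤ K) (h : IsTSaSmall T N) :
    IsTSaSmall (T.comap K.subtype) (N.comap K.subtype) := by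
  intro X hX hTX
  set X' := X.map K.subtype with hX'def
  have hinj : Function.Injective (K.subtype) := K.injective_subtype
  have hX'ne : X' ≠ ⊥ := by
    intro hb
    apply hX
    apply Submodule.map_injective_of_injective hinj
    rw [Submodule.map_bot, ← hX'def]; exact hb
  -- T ≤ N ⊔ X'
  have hT : T ≤ N ⊔ X' := by
    intro t ht
    have htK : t ∈ K := hTK ht
    have h1 : (⟨t, htK⟩ : K) ∈ N.comap K.subtype ⊔ X := hTX (by simpa using ht)
    have h2 := Submodule.mem_map_of_mem (f := K.subtype) h1
    rw [Submodule.map_sup, Submodule.map_comap_eq] at h2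
    have : LinearMap.range K.subtype ⊓ N = N := by
      rw [Submodule.range_subtype, inf_eq_right.mpr hNK]
    rw [this] at h2
    simpa using h2
  -- annihilators agree
  have hAnnEq : Submodule.annihilator X = Submodule.annihilator X' := by
    ext r
    simp only [Submodule.mem_annihilator]
    constructor
    · rintro hr m hm
      rcases (Submodule.mem_map).mp hm with ⟨x, hx, rfl⟩
      have := hr x hx
      calc r • (K.subtype x) = K.subtype (r • x) := by simp
        _ = 0 := by rw [this]; simp
    · intro hr x hx
      apply hinj
      have := hr (K.subtype x) (Submodule.mem_map_of_mem hx)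
      simpa using this
  -- colon in K equals T.colon K
  have hColonEq : (T.comap K.subtype).colon ⊤ = T.colon K := by
    ext r
    rw [Submodule.mem_colon, Submodule.mem_colon]
    constructor
    · intro hr m hm
      have := hr ⟨m, hm⟩ trivial
      simpa using this
    · intro hr x _
      simp only [Submodule.mem_comap, Submodule.coe_subtype]
      have : r • (x : M) = (K.subtype (r • x)) := by simp
      exact hr x x.2
  have hCD : T.colon ⊤ ≤ T.colon K := by
    intro r hr
    rw [Submodule.mem_colon] at hr ⊢
    exact fun p hp => hr p trivial
  obtain ⟨hAnn, hSmall⟩ := h X' hX'ne hT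
  refine ⟨by rw [hAnnEq, hColonEq]; exact hAnn.trans hCD, ?_⟩
  intro Y hY hsup
  rw [hAnnEq, hColonEq] at hsup
  rw [hColonEq] at hY ⊢
  -- modular law
  have hmod : (Submodule.annihilator X' ⊔ Y) ⊓ T.colon ⊤ =
      Submodule.annihilator X' ⊔ (Y ⊓ T.colon ⊤) :=
    sup_inf_assoc_of_le _ hAnn
  rw [hsup, inf_eq_right.mpr hCD] at hmod
  have hYC : Y ⊓ T.colon ⊤ = T.colon ⊤ := hSmall _ inf_le_right hmod.symm
  have hCle : T.colon ⊤ ≤ Y := by rw [← hYC]; exact inf_le_left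
  rw [← hsup]
  rw [sup_eq_right.mpr (hAnn.trans hCle)]
end

section
/- Let R be an Artinian commutative ring with identity and let I be an ideal of R which is a J(R)-sa-small ideal of R, where J(R) is the Jacobson radical of R. Then for every maximal ideal m of R, I is an m-sa-small ideal of R. -/
open Submodule

/-!
Being `T`-sa-small is monotone in `T`: enlarging `T` weakens the condition on `X`, enlarges the
ideal `(T :_R M)` containing `Ann(X)`, and by the modular law smallness of `Ann(X)` below the
smaller colon ideal passes to the larger one. Since `J(R) ⊆ m`, the theorem follows.
-/

theorem eq_of_sup_eq_of_small_below {α : Type*} [Lattice α] [IsModularLattice α] {a c c' : α}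
    (hac : a ≤ c) (hcc' : c ≤ c') (hsmall : ∀ y ≤ c, a ⊔ y = c → y = c) :
    ∀ y ≤ c', a ⊔ y = c' → y = c' := by
  intro y hy hsup
  have hyc : y ⊓ c = c :=
    hsmall _ inf_le_right (by rw [← sup_inf_assoc_of_le y hac, hsup, inf_eq_right.2 hcc'])
  have hay : a ≤ y := hac.trans (hyc ▸ inf_le_left)
  exact le_antisymm hy (hsup ▸ sup_le hay le_rfl)

theorem IsTSaSmall.mono {R M : Type*} [CommRing R] [AddCommGroup M] [Module R M]
    {T T' N : Submodule R M} (h : IsTSaSmall T N) (hT : T ≤ T') : IsTSaSmall T' N := by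
  intro X hX hle
  obtain ⟨hann, hsmall⟩ := h X hX (hT.trans hle)
  have hcolon : T.colon ⊤ ≤ T'.colon ⊤ := colon_mono hT le_rfl
  exact ⟨hann.trans hcolon, eq_of_sup_eq_of_small_below hann hcolon hsmall⟩

theorem isTSaSmall_maximal_of_jacobson_general {R : Type*} [CommRing R]
    (I : Ideal R)
    (h : IsTSaSmall (R := R) (M := R) (Ideal.jacobson (⊥ : Ideal R)) I)
    (m : Ideal R) (hm : m.IsMaximal) :
    IsTSaSmall (R := R) (M := R) m I :=
  h.mono (sInf_le ⟨bot_le, hm⟩)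

/-- In an Artinian commutative ring, if `I` is a `J(R)`-sa-small ideal, then
`I` is an `m`-sa-small ideal for every maximal ideal `m`. -/
theorem isTSaSmall_maximal_of_jacobson {R : Type*} [CommRing R] [Nontrivial R]
    [IsArtinianRing R] (I : Ideal R)
    (h : IsTSaSmall (R := R) (M := R) (Ideal.jacobson (⊥ : Ideal R)) I)
    (m : Ideal R) (hm : m.IsMaximal) :
    IsTSaSmall (R := R) (M := R) m I :=
  isTSaSmall_maximal_of_jacobson_general I h m hm
end

section
/- Let R be a commutative ring with identity and let M be a multiplication R-module which is an internal direct sum M = N ⊕ K of nonzero finitely generated submodules N and K (i.e., N + K = M and N ∩ K = 0). Then N is not a sa-small submodule of M (and likewise K is not). -/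
open Submodule

lemma aux_not_isSaSmall {R M : Type*} [CommRing R] [Nontrivial R]
    [AddCommGroup M] [Module R M]
    (hmult : ∀ P : Submodule R M, ∃ I : Ideal R, P = I • (⊤ : Submodule R M))
    (N K : Submodule R M) (hN : N ≠ ⊥)
    (hNfg : N.FG) (hKfg : K.FG)
    (hsum : N ⊔ K = ⊤) (hint : N ⊓ K = ⊥) : ¬ IsSaSmall N := by
  intro hsa
  have hsmall : IsSmallSubmodule (Submodule.annihilator K : Ideal R) := hsa K hsum
  obtain ⟨I, hI⟩ := hmult N
  obtain ⟨J, hJ⟩ := hmult K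
  -- I ≤ Ann K
  have hIK : I ≤ K.annihilator := by
    intro r hr
    rw [Submodule.mem_annihilator]
    intro k hk
    have h1 : r • k ∈ N := by
      rw [hI]
      exact Submodule.smul_mem_smul hr trivial
    have h2 : r • k ∈ K := K.smul_mem r hk
    have : r • k ∈ N ⊓ K := ⟨h1, h2⟩
    rw [hint] at this
    exact this
  have hJN : J ≤ N.annihilator := by
    intro r hr
    rw [Submodule.mem_annihilator]
    intro n hn
    have h1 : r • n ∈ K := by
      rw [hJ]
      exact Submodule.smul_mem_smul hr trivial
    have h2 : r • n ∈ N := N.smul_mem r hn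
    have : r • n ∈ N ⊓ K := ⟨h2, h1⟩
    rw [hint] at this
    exact this
  have htopfg : (⊤ : Submodule R M).FG := hsum ▸ hNfg.sup hKfg
  have hle : (⊤ : Submodule R M) ≤ (I + J) • ⊤ := by
    rw [Submodule.add_eq_sup, Submodule.sup_smul, ← hI, ← hJ, hsum]
  obtain ⟨r, hr1, hr0⟩ :=
    Submodule.exists_sub_one_mem_and_smul_eq_zero_of_fg_of_le_smul (I + J) ⊤ htopfg hle
  -- r ∈ Ann K
  have hrK : r ∈ K.annihilator := by
    rw [Submodule.mem_annihilator]
    exact fun k _ => hr0 k trivial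
  have hsub : r - 1 ∈ K.annihilator ⊔ N.annihilator :=
    (sup_le_sup hIK hJN : I ⊔ J ≤ K.annihilator ⊔ N.annihilator) hr1
  have hone : (1 : R) ∈ K.annihilator ⊔ N.annihilator := by
    have : (1 : R) = r - (r - 1) := by ring
    rw [this]
    exact Submodule.sub_mem _ (Submodule.mem_sup_left hrK) hsub
  have htop : K.annihilator ⊔ N.annihilator = ⊤ :=
    (Ideal.eq_top_iff_one _).mpr hone
  have hNtop : N.annihilator = ⊤ := hsmall _ htop
  apply hN
  rw [eq_bot_iff]
  intro n hn
  have : (1 : R) ∈ N.annihilator := hNtop ▸ trivial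
  rw [Submodule.mem_annihilator] at this
  simpa using this n hn

/-- If a multiplication module `M` is the internal direct sum of nonzero
finitely generated submodules `N` and `K`, then neither `N` nor `K` is sa-small in `M`. -/
theorem not_isSaSmall_of_directSummand {R M : Type*} [CommRing R] [Nontrivial R]
    [AddCommGroup M] [Module R M]
    (hmult : ∀ P : Submodule R M, ∃ I : Ideal R, P = I • (⊤ : Submodule R M))
    (N K : Submodule R M) (hN : N ≠ ⊥) (hK : K ≠ ⊥)
    (hNfg : N.FG) (hKfg : K.FG)
    (hsum : N ⊔ K = ⊤) (hint : N ⊓ K = ⊥) :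
    ¬ IsSaSmall N ∧ ¬ IsSaSmall K :=
  ⟨aux_not_isSaSmall hmult N K hN hNfg hKfg hsum hint,
   aux_not_isSaSmall hmult K N hK hKfg hNfg (sup_comm K N ▸ hsum) (inf_comm K N ▸ hint)⟩
end

section
/- Let R be a commutative ring with identity and let m be a maximal ideal of R which is a sa-small ideal of R. Then for every x ∈ R with x ∉ m, Ann_R(Rx) ⊆ J(R), where J(R) is the Jacobson radical of R. -/
open Submodule

/-- If a maximal ideal `m` of `R` is a sa-small ideal, then for every
`x ∉ m`, `Ann_R(Rx) ⊆ J(R)`. -/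
theorem ann_le_jacobson_of_maximal_isSaSmall {R : Type*} [CommRing R] [Nontrivial R]
    (m : Ideal R) (hm : m.IsMaximal) (hsa : IsSaSmall (R := R) (M := R) m)
    (x : R) (hx : x ∉ m) :
    Submodule.annihilator (Ideal.span {x}) ≤ Ideal.jacobson (⊥ : Ideal R) := by
  have hsup : m ⊔ Ideal.span {x} = ⊤ := by
    by_contra h
    have := hm.eq_of_le h le_sup_left
    exact hx (this.symm ▸ (le_sup_right : Ideal.span {x} ≤ m ⊔ Ideal.span {x}) (Ideal.subset_span rfl))
  have hsmall : IsSmallSubmodule (Submodule.annihilator (Ideal.span {x}) : Ideal R) :=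
    hsa _ hsup
  intro a ha
  rw [Ideal.jacobson, Ideal.mem_sInf]
  rintro J ⟨-, hJmax⟩
  by_contra haJ
  have hlt : J < Submodule.annihilator (Ideal.span {x}) ⊔ J :=
    lt_of_le_of_ne le_sup_right (fun h => haJ (h ▸ Submodule.mem_sup_left ha))
  have hsupJ : Submodule.annihilator (Ideal.span {x}) ⊔ J = ⊤ := (Ideal.isMaximal_def.mp hJmax).2 _ hlt
  exact hJmax.ne_top (hsmall J hsupJ)
end

section
/- Let R be a commutative ring with identity and M a nonzero prime R-module such that Ann_R(M) is a small ideal of R. Then a submodule N of M is a sa-small submodule of M if and only if N is a proper submodule of M. -/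
open Submodule

/-- If `M` is a nonzero prime module with `Ann_R(M)` small in `R`, then a
submodule `N` of `M` is sa-small if and only if `N` is proper. -/
theorem isSaSmall_iff_proper_of_prime {R M : Type*} [CommRing R] [Nontrivial R]
    [AddCommGroup M] [Module R M] [Nontrivial M]
    (hprime : ∀ K : Submodule R M, K ≠ ⊥ →
      Submodule.annihilator K = Submodule.annihilator (⊤ : Submodule R M))
    (hann : IsSmallSubmodule (Submodule.annihilator (⊤ : Submodule R M) : Ideal R))
    (N : Submodule R M) : IsSaSmall N ↔ N ≠ ⊤ := by
  constructor
  · intro h hN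
    have := h ⊥ (by simp [hN])
    rw [Submodule.annihilator_bot] at this
    have := this ⊥ (by simp)
    exact absurd this bot_ne_top
  · intro hN L hL
    have hLne : L ≠ ⊥ := by
      rintro rfl
      simp at hL
      exact hN hL
    rw [hprime L hLne]
    exact hann
end

section
/- Let R be a semisimple commutative ring with identity in which every proper ideal is a sa-small ideal of R (R is a sa-small hollow ring). Then R is a simple ring; that is, the only ideals of R are 0 and R. -/
open Submodule

/-- A semisimple commutative ring in which every proper ideal is sa-small
is simple: its only ideals are `0` and `R`. -/
theorem simple_of_semisimple_saSmall_hollow {R : Type*} [CommRing R] [Nontrivial R]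
    [IsSemisimpleRing R]
    (hhollow : ∀ I : Ideal R, I ≠ ⊤ → IsSaSmall (R := R) (M := R) I) :
    ∀ I : Ideal R, I = ⊥ ∨ I = ⊤ := by
  intro I
  by_cases hI : I = ⊤
  · exact Or.inr hI
  · left
    obtain ⟨J, hJ⟩ := exists_isCompl I
    have hIJ : I ≤ Submodule.annihilator J := by
      intro x hx
      rw [Submodule.mem_annihilator]
      intro n hn
      have : x • n ∈ I ⊓ J := ⟨by simpa [smul_eq_mul] using I.mul_mem_right n hx, J.smul_mem x hn⟩
      rwa [hJ.inf_eq_bot, Submodule.mem_bot] at this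
    have hsmall := hhollow I hI J hJ.sup_eq_top
    have hJtop : J = ⊤ := hsmall J (top_le_iff.mp (hJ.sup_eq_top ▸ sup_le_sup_right hIJ J))
    have := hJ.inf_eq_bot
    rw [hJtop, inf_top_eq] at this
    exact this
end

section
/- Let R be a commutative von Neumann regular ring with identity. Then no nonzero finitely generated ideal of R is a sa-small ideal of R. -/
open Submodule

/-!
In a von Neumann regular ring every ideal is idempotent, so a finitely generated one is
generated by an idempotent `e`. Then `(e) + (1 - e) = R` and `e` annihilates `(1 - e)`, so
`Ann(1 - e) + (1 - e) = R` as well; smallness of `Ann(1 - e)` would force `(1 - e) = R`,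
i.e. `1 - e` is an idempotent unit, so `e = 0`.
-/

section

variable {R : Type*} [CommRing R]

theorem Ideal.isIdempotentElem_of_vonNeumannRegular (hvnr : ∀ a : R, ∃ b : R, a = a * b * a)
    (I : Ideal R) : IsIdempotentElem I := by
  refine le_antisymm Ideal.mul_le_left fun a ha => ?_
  obtain ⟨b, hb⟩ := hvnr a
  rw [hb]
  exact Ideal.mul_mem_mul (I.mul_mem_right b ha) ha

theorem IsSaSmall.eq_top_of_le_annihilator {I L : Ideal R} (hI : IsSaSmall I)
    (hsup : I ⊔ L = ⊤) (hle : I ≤ L.annihilator) : L = ⊤ :=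
  hI L hsup L (top_le_iff.mp (hsup ▸ sup_le_sup_right hle L))

theorem not_isSaSmall_span_isIdempotentElem {e : R} (he : IsIdempotentElem e) (he0 : e ≠ 0) :
    ¬ IsSaSmall (R ∙ e) := by
  intro hsa
  have hsup : R ∙ e ⊔ R ∙ (1 - e) = ⊤ :=
    (Ideal.sup_eq_top_iff_isCoprime e (1 - e)).mpr ⟨1, 1, by ring⟩
  have hle : R ∙ e ≤ (R ∙ (1 - e)).annihilator := by
    rw [Submodule.span_singleton_le_iff_mem, Submodule.mem_annihilator_span_singleton,
      smul_eq_mul, he.mul_one_sub_self]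
  have hunit : IsUnit (1 - e) :=
    Ideal.span_singleton_eq_top.mp (hsa.eq_top_of_le_annihilator hsup hle)
  exact he0 (sub_eq_self.mp ((IsIdempotentElem.iff_eq_one_of_isUnit hunit).mp he.one_sub))

end

theorem not_saSmall_of_fg_vonNeumannRegular_general {R : Type*} [CommRing R]
    (hvnr : ∀ a : R, ∃ b : R, a = a * b * a)
    (I : Ideal R) (hI : I ≠ ⊥) (hfg : I.FG) :
    ¬ IsSaSmall (R := R) (M := R) I := by
  obtain ⟨e, he, rfl⟩ :=
    (I.isIdempotentElem_iff_of_fg hfg).mp (I.isIdempotentElem_of_vonNeumannRegular hvnr)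
  exact not_isSaSmall_span_isIdempotentElem he (by rintro rfl; simp at hI)

/-- In a commutative von Neumann regular ring, no nonzero finitely
generated ideal is a sa-small ideal. -/
theorem not_saSmall_of_fg_vonNeumannRegular {R : Type*} [CommRing R] [Nontrivial R]
    (hvnr : ∀ a : R, ∃ b : R, a = a * b * a)
    (I : Ideal R) (hI : I ≠ ⊥) (hfg : I.FG) :
    ¬ IsSaSmall (R := R) (M := R) I :=
  not_saSmall_of_fg_vonNeumannRegular_general hvnr I hI hfg
end

section
/- Let R be an integral domain and M a faithful multiplication R-module. Then a submodule N of M is a sa-small submodule of M if and only if N is a proper submodule of M. -/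
open Submodule

/-- If `R` is an integral domain and `M` is a faithful multiplication
`R`-module, then a submodule `N` is sa-small in `M` if and only if `N` is proper. -/
theorem isSaSmall_iff_proper_of_domain_multiplication {R M : Type*} [CommRing R]
    [IsDomain R] [AddCommGroup M] [Module R M]
    (hfaith : Submodule.annihilator (⊤ : Submodule R M) = ⊥)
    (hmult : ∀ P : Submodule R M, ∃ I : Ideal R, P = I • (⊤ : Submodule R M))
    (N : Submodule R M) : IsSaSmall N ↔ N ≠ ⊤ := by
  constructor
  · intro h hN
    have h0 := h ⊥ (by simp [hN])
    rw [Submodule.annihilator_bot] at h0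
    have := h0 ⊥ (by simp)
    exact absurd this bot_ne_top
  · intro hN L hL
    obtain ⟨J, hJ⟩ := hmult L
    have hann : Submodule.annihilator L = ⊥ := by
      rw [eq_bot_iff]
      intro r hr
      rw [Submodule.mem_annihilator] at hr
      rw [Ideal.mem_bot]
      by_contra hr0
      have hJ0 : J = ⊥ := by
        rw [eq_bot_iff]
        intro j hj
        rw [Ideal.mem_bot]
        have hrj : r * j = 0 := by
          have : (r * j) ∈ Submodule.annihilator (⊤ : Submodule R M) := by
            rw [Submodule.mem_annihilator]
            intro m _
            have hm : j • m ∈ L := by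
              rw [hJ]; exact Submodule.smul_mem_smul hj trivial
            have := hr _ hm
            rw [mul_smul]
            exact this
          rw [hfaith] at this
          exact Ideal.mem_bot.mp this
        rcases mul_eq_zero.mp hrj with h' | h'
        · exact absurd h' hr0
        · exact h'
      have hL0 : L = ⊥ := by rw [hJ, hJ0, Submodule.bot_smul]
      rw [hL0, sup_bot_eq] at hL
      exact hN hL
    rw [hann]
    intro K hK
    simpa using hK
end

section
/- Let R be a commutative ring with identity and M a multiplication R-module. If N is a sa-small submodule of M, then (N :_R M) is a sa-small ideal of R. Conversely, if moreover M is finitely generated and faithful and (N :_R M) is a sa-small ideal of R, then N is a sa-small submodule of M. -/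
open Submodule

/-!
In a multiplication module every submodule is `(N :_R M) M`, so the relation `N + L = M`
between submodules is the image of the relation `(N :_R M) + I = R` between ideals under
`I ↦ I M`; for `M` finitely generated and faithful, Nakayama's lemma shows that `I M = M`
forces `I = R`, so the two relations correspond exactly. Smallness then transfers because it
passes to smaller ideals and `Ann(I) ⊆ Ann(I M)`, with equality when `M` is faithful.
-/

section

variable {R M : Type*} [CommRing R] [AddCommGroup M] [Module R M]

def IsMultiplicationModule (R M : Type*) [CommRing R] [AddCommGroup M] [Module R M] : Prop :=
  ∀ P : Submodule R M, ∃ I : Ideal R, P = I • (⊤ : Submodule R M)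

theorem IsSmallSubmodule.mono {N N' : Submodule R M} (h : N ≤ N') (hN' : IsSmallSubmodule N') :
    IsSmallSubmodule N :=
  fun L hL ↦ hN' L (top_unique (hL ▸ sup_le_sup_right h L))

namespace IsMultiplicationModule

theorem colon_smul_top (hM : IsMultiplicationModule R M) (N : Submodule R M) :
    N.colon ⊤ • (⊤ : Submodule R M) = N := by
  obtain ⟨I, rfl⟩ := hM N
  refine le_antisymm (smul_le.2 fun r hr m _ ↦ mem_colon.1 hr m trivial) ?_
  exact smul_mono_left fun i hi ↦ mem_colon.2 fun m _ ↦ smul_mem_smul hi trivial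

theorem colon_sup_smul_top (hM : IsMultiplicationModule R M) (N : Submodule R M) (I : Ideal R) :
    (N.colon ⊤ ⊔ I) • (⊤ : Submodule R M) = N ⊔ I • ⊤ := by
  rw [sup_smul, hM.colon_smul_top]

end IsMultiplicationModule

theorem Submodule.annihilator_le_annihilator_smul (I : Ideal R) (N : Submodule R M) :
    annihilator I ≤ annihilator (I • N) := by
  rw [le_annihilator_iff, ← Submodule.mul_smul, annihilator_mul, bot_smul]

theorem Submodule.annihilator_smul_top_le_of_faithful
    (hfaith : annihilator (⊤ : Submodule R M) = ⊥) (I : Ideal R) :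
    annihilator (I • ⊤ : Submodule R M) ≤ annihilator I := by
  have h : annihilator (I • ⊤ : Submodule R M) * I ≤ annihilator (⊤ : Submodule R M) := by
    rw [le_annihilator_iff, Submodule.mul_smul, annihilator_smul]
  rw [le_annihilator_iff, ← le_bot_iff, ← hfaith]
  exact h

theorem Ideal.eq_top_of_smul_top_eq_top_of_faithful [Module.Finite R M]
    (hfaith : annihilator (⊤ : Submodule R M) = ⊥) {I : Ideal R}
    (hI : I • (⊤ : Submodule R M) = ⊤) : I = ⊤ := by
  obtain ⟨r, hrI, hr⟩ :=
    exists_mem_and_smul_eq_self_of_fg_of_le_smul I ⊤ Module.Finite.fg_top hI.ge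
  have hr1 : r - 1 ∈ annihilator (⊤ : Submodule R M) :=
    mem_annihilator.2 fun m hm ↦ by rw [sub_smul, one_smul, hr m hm, sub_self]
  rw [hfaith, mem_bot, sub_eq_zero] at hr1
  exact (eq_top_iff_one I).2 (hr1 ▸ hrI)

end

theorem isSaSmall_colon_iff_general {R M : Type*} [CommRing R]
    [AddCommGroup M] [Module R M]
    (hmult : ∀ P : Submodule R M, ∃ I : Ideal R, P = I • (⊤ : Submodule R M))
    (N : Submodule R M) :
    (IsSaSmall N → IsSaSmall (R := R) (M := R) (N.colon ⊤)) ∧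
    (Module.Finite R M → Submodule.annihilator (⊤ : Submodule R M) = ⊥ →
      IsSaSmall (R := R) (M := R) (N.colon ⊤) → IsSaSmall N) := by
  have hM : IsMultiplicationModule R M := hmult
  constructor
  · intro hN I hI
    have hNI : N ⊔ I • ⊤ = ⊤ := by rw [← hM.colon_sup_smul_top, hI, top_smul]
    exact (hN _ hNI).mono (annihilator_le_annihilator_smul I ⊤)
  · intro _ hfaith hcolon L hL
    obtain ⟨I, rfl⟩ := hM L
    have hI : N.colon ⊤ ⊔ I = ⊤ :=
      Ideal.eq_top_of_smul_top_eq_top_of_faithful hfaith (by rw [hM.colon_sup_smul_top, hL])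
    exact (hcolon I hI).mono (annihilator_smul_top_le_of_faithful hfaith I)

/-- For a multiplication module `M`: if `N` is sa-small in `M` then
`(N :_R M)` is a sa-small ideal of `R`; conversely, if moreover `M` is finitely generated
and faithful and `(N :_R M)` is a sa-small ideal, then `N` is sa-small in `M`. -/
theorem isSaSmall_colon_iff {R M : Type*} [CommRing R] [Nontrivial R]
    [AddCommGroup M] [Module R M]
    (hmult : ∀ P : Submodule R M, ∃ I : Ideal R, P = I • (⊤ : Submodule R M))
    (N : Submodule R M) :
    (IsSaSmall N → IsSaSmall (R := R) (M := R) (N.colon ⊤)) ∧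
    (Module.Finite R M → Submodule.annihilator (⊤ : Submodule R M) = ⊥ →
      IsSaSmall (R := R) (M := R) (N.colon ⊤) → IsSaSmall N) :=
  isSaSmall_colon_iff_general hmult N
end

section
/- Let R be a commutative ring with identity, M a faithful finitely generated multiplication R-module, and N, T submodules of M. Then N is a T-sa-small submodule of M if and only if (N :_R M) is a (T :_R M)-sa-small ideal of R. -/
open Submodule

-- Auxiliary lemmas

section Aux
variable {R M : Type*} [CommRing R] [AddCommGroup M] [Module R M]

-- L3: colon of an ideal with ⊤ in R is itself
lemma colon_top_self (I : Submodule R R) : I.colon ⊤ = I := by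
  ext r
  rw [Submodule.mem_colon]
  constructor
  · intro h
    simpa using h 1 trivial
  · intro h x _
    simpa [smul_eq_mul, mul_comm] using I.smul_mem x h

-- L1: every submodule equals its colon smul top
lemma eq_colon_smul_top (hmult : ∀ P : Submodule R M, ∃ I : Ideal R, P = I • (⊤ : Submodule R M))
    (P : Submodule R M) : P = (P.colon ⊤) • (⊤ : Submodule R M) := by
  obtain ⟨I, hI⟩ := hmult P
  apply le_antisymm
  · have hIle : I ≤ P.colon ⊤ := by
      intro i hi
      rw [Submodule.mem_colon]
      intro m _
      rw [hI]
      exact smul_mem_smul hi trivial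
    calc P = I • ⊤ := hI
      _ ≤ (P.colon ⊤) • ⊤ := Submodule.smul_mono_left hIle
  · intro x hx
    refine Submodule.smul_induction_on hx ?_ ?_
    · intro r hr m _
      exact (Submodule.mem_colon.mp hr) m trivial
    · intro a b ha hb; exact P.add_mem ha hb

-- L2: annihilator of I • ⊤ equals annihilator of I (as submodule of R), given faithful
lemma annihilator_smul_top (hfaith : Submodule.annihilator (⊤ : Submodule R M) = ⊥)
    (I : Ideal R) :
    Submodule.annihilator (I • (⊤ : Submodule R M)) = Submodule.annihilator (I : Submodule R R) := by
  ext r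
  rw [Submodule.mem_annihilator, Submodule.mem_annihilator]
  constructor
  · intro h i hi
    have : r * i ∈ Submodule.annihilator (⊤ : Submodule R M) := by
      rw [Submodule.mem_annihilator]
      intro m _
      have := h (i • m) (smul_mem_smul hi trivial)
      simpa [mul_smul] using this
    rw [hfaith] at this
    simpa using this
  · intro h x hx
    refine Submodule.smul_induction_on hx ?_ ?_
    · intro i hi m _
      have : r * i = 0 := by simpa using h i hi
      rw [← mul_smul, this, zero_smul]
    · intro a b ha hb; rw [smul_add, ha, hb, add_zero]

-- L5: smul top eq bot iff
lemma smul_top_eq_bot_iff (hfaith : Submodule.annihilator (⊤ : Submodule R M) = ⊥)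
    (I : Ideal R) : I • (⊤ : Submodule R M) = ⊥ ↔ I = ⊥ := by
  constructor
  · intro h
    rw [eq_bot_iff]
    intro i hi
    have : i ∈ Submodule.annihilator (⊤ : Submodule R M) := by
      rw [Submodule.mem_annihilator]
      intro m _
      have : i • m ∈ I • (⊤ : Submodule R M) := smul_mem_smul hi trivial
      rw [h] at this
      simpa using this
    rw [hfaith] at this
    exact this
  · intro h; rw [h, bot_smul]

-- Key cancellation lemma
lemma colon_smul_top_eq [Module.Finite R M]
    (hfaith : Submodule.annihilator (⊤ : Submodule R M) = ⊥)
    (hmult : ∀ P : Submodule R M, ∃ I : Ideal R, P = I • (⊤ : Submodule R M))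
    (B : Ideal R) : (B • (⊤ : Submodule R M)).colon ⊤ = B := by
  apply le_antisymm
  · intro r hr
    rw [Submodule.mem_colon] at hr
    -- J = {s | s * r ∈ B}
    set J : Ideal R :=
      { carrier := {s | s * r ∈ B}
        add_mem' := fun {a b} ha hb => by simpa [add_mul] using B.add_mem ha hb
        zero_mem' := by simp
        smul_mem' := fun c x hx => by
          simpa [smul_eq_mul, mul_assoc] using B.mul_mem_left c hx } with hJ
    have hJtop : J = ⊤ := by
      by_contra hne
      obtain ⟨P, hPmax, hJP⟩ := Ideal.exists_le_maximal J hne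
      -- find m with colon not in P
      have hex : ∃ m : M, ¬ ((Submodule.span R {m}).colon ⊤ ≤ P) := by
        by_contra hall
        push_neg at hall
        have hle : (⊤ : Submodule R M) ≤ P • ⊤ := by
          intro m _
          have h1 : (Submodule.span R {m}) = ((Submodule.span R {m}).colon ⊤) • ⊤ :=
            eq_colon_smul_top hmult _
          have hm : m ∈ ((Submodule.span R {m}).colon ⊤) • (⊤ : Submodule R M) := by
            rw [← h1]; exact Submodule.mem_span_singleton_self m
          exact Submodule.smul_mono_left (hall m) hm
        obtain ⟨s, hs1, hs2⟩ :=
          Submodule.exists_sub_one_mem_and_smul_eq_zero_of_fg_of_le_smul P ⊤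
            (Module.Finite.fg_top) hle
        have hs0 : s ∈ Submodule.annihilator (⊤ : Submodule R M) := by
          rw [Submodule.mem_annihilator]
          exact fun m _ => hs2 m trivial
        rw [hfaith, Submodule.mem_bot] at hs0
        subst hs0
        have : (1 : R) ∈ P := by simpa using P.neg_mem hs1
        exact hPmax.ne_top (P.eq_top_of_isUnit_mem this isUnit_one)
      obtain ⟨m, hm⟩ := hex
      obtain ⟨a, hac, haP⟩ := SetLike.not_le_iff_exists.mp hm
      rw [Submodule.mem_colon] at hac
      -- ∀ z ∈ B•⊤, ∃ b ∈ B, a • z = b • m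
      have hkey : ∀ z ∈ B • (⊤ : Submodule R M), ∃ b ∈ B, a • z = b • m := by
        intro z hz
        refine Submodule.smul_induction_on hz ?_ ?_
        · intro b' hb' y _
          obtain ⟨c, hc⟩ := Submodule.mem_span_singleton.mp (hac y trivial)
          refine ⟨b' * c, B.mul_mem_right c hb', ?_⟩
          rw [smul_comm, ← hc, smul_smul]
        · rintro x y ⟨b1, hb1, he1⟩ ⟨b2, hb2, he2⟩
          exact ⟨b1 + b2, B.add_mem hb1 hb2, by rw [smul_add, he1, he2, add_smul]⟩
      obtain ⟨b, hbB, hbm⟩ := hkey (r • m) (hr m trivial)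
      -- show (a*a*r - a*b) annihilates everything
      have hz : ∀ x : M, (a * a * r - a * b) • x = 0 := by
        intro x
        obtain ⟨c, hc⟩ := Submodule.mem_span_singleton.mp (hac x trivial)
        have h1 : (a * a * r) • x = (a * b) • x := by
          calc (a * a * r) • x = (a * r) • (a • x) := by
                rw [← mul_smul]; ring_nf
            _ = (a * r) • (c • m) := by rw [hc]
            _ = c • ((a*r) • m) := by rw [smul_comm]
            _ = c • (a • (r • m)) := by rw [mul_smul]
            _ = c • (b • m) := by rw [hbm]
            _ = b • (c • m) := by rw [smul_comm]
            _ = b • (a • x) := by rw [hc]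
            _ = (a * b) • x := by rw [← mul_smul, mul_comm]
        rw [sub_smul, h1, sub_self]
      have hmem : a * a * r - a * b ∈ Submodule.annihilator (⊤ : Submodule R M) := by
        rw [Submodule.mem_annihilator]; exact fun m _ => hz m
      rw [hfaith, Submodule.mem_bot, sub_eq_zero] at hmem
      have haaJ : a * a ∈ J := by
        show a * a * r ∈ B
        rw [hmem]; exact B.mul_mem_left a hbB
      have : a * a ∈ P := hJP haaJ
      rcases (hPmax.isPrime.mem_or_mem this) with h | h <;> exact haP h
    have h1J : (1 : R) ∈ J := hJtop ▸ trivial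
    have : (1 : R) * r ∈ B := h1J
    simpa using this
  · intro b hb
    rw [Submodule.mem_colon]
    intro m _
    exact smul_mem_smul hb trivial

end Aux

theorem isTSaSmall_iff_colon' {R M : Type*} [CommRing R] [Nontrivial R]
    [AddCommGroup M] [Module R M] [Module.Finite R M]
    (hfaith : Submodule.annihilator (⊤ : Submodule R M) = ⊥)
    (hmult : ∀ P : Submodule R M, ∃ I : Ideal R, P = I • (⊤ : Submodule R M))
    (N T : Submodule R M) :
    (∀ X : Submodule R M, X ≠ ⊥ → T ≤ N ⊔ X →
      Submodule.annihilator X ≤ T.colon ⊤ ∧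
      ∀ Y : Ideal R, Y ≤ T.colon ⊤ →
        Submodule.annihilator X ⊔ Y = T.colon ⊤ → Y = T.colon ⊤) ↔
    (∀ X : Submodule R R, X ≠ ⊥ → T.colon ⊤ ≤ N.colon ⊤ ⊔ X →
      Submodule.annihilator X ≤ (T.colon ⊤).colon ⊤ ∧
      ∀ Y : Ideal R, Y ≤ (T.colon ⊤).colon ⊤ →
        Submodule.annihilator X ⊔ Y = (T.colon ⊤).colon ⊤ → Y = (T.colon ⊤).colon ⊤) := by
  constructor
  · intro h X hX hle
    have hX' : X • (⊤ : Submodule R M) ≠ ⊥ := fun hb =>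
      hX ((smul_top_eq_bot_iff hfaith X).mp hb)
    have hTle : T ≤ N ⊔ X • (⊤ : Submodule R M) := by
      calc T = (T.colon ⊤) • ⊤ := eq_colon_smul_top hmult T
        _ ≤ ((N.colon ⊤) ⊔ X) • ⊤ := Submodule.smul_mono_left hle
        _ = (N.colon ⊤) • ⊤ ⊔ X • ⊤ := Submodule.sup_smul _ _ _
        _ = N ⊔ X • ⊤ := by rw [← eq_colon_smul_top hmult N]
    obtain ⟨h1, h2⟩ := h (X • ⊤) hX' hTle
    rw [annihilator_smul_top hfaith X] at h1 h2
    rw [colon_top_self]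
    exact ⟨h1, h2⟩
  · intro h X hX hle
    have hXeq : X = (X.colon ⊤) • (⊤ : Submodule R M) := eq_colon_smul_top hmult X
    have hI : X.colon ⊤ ≠ ⊥ := fun hb => hX (by rw [hXeq, hb, Submodule.bot_smul])
    have hle' : T.colon ⊤ ≤ (N.colon ⊤) ⊔ X.colon ⊤ := by
      intro r hr
      have h2 : T ≤ (N.colon ⊤ ⊔ X.colon ⊤) • (⊤ : Submodule R M) := by
        calc T ≤ N ⊔ X := hle
          _ = (N.colon ⊤) • ⊤ ⊔ (X.colon ⊤) • ⊤ := by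
              rw [← eq_colon_smul_top hmult N, ← hXeq]
          _ = (N.colon ⊤ ⊔ X.colon ⊤) • ⊤ := (Submodule.sup_smul _ _ _).symm
      have h1 : r ∈ ((N.colon ⊤ ⊔ X.colon ⊤) • (⊤ : Submodule R M)).colon ⊤ := by
        rw [Submodule.mem_colon]
        intro m _
        exact h2 (Submodule.mem_colon.mp hr m trivial)
      rwa [colon_smul_top_eq hfaith hmult] at h1
    obtain ⟨h1, h2⟩ := h (X.colon ⊤) hI hle'
    rw [colon_top_self] at h1 h2
    rw [hXeq, annihilator_smul_top hfaith]
    exact ⟨h1, h2⟩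

/-- For a faithful finitely generated multiplication module `M`, a
submodule `N` is `T`-sa-small in `M` if and only if `(N :_R M)` is a `(T :_R M)`-sa-small
ideal of `R`. -/
theorem isTSaSmall_iff_colon {R M : Type*} [CommRing R] [Nontrivial R]
    [AddCommGroup M] [Module R M] [Module.Finite R M]
    (hfaith : Submodule.annihilator (⊤ : Submodule R M) = ⊥)
    (hmult : ∀ P : Submodule R M, ∃ I : Ideal R, P = I • (⊤ : Submodule R M))
    (N T : Submodule R M) :
    IsTSaSmall T N ↔ IsTSaSmall (R := R) (M := R) (T.colon ⊤) (N.colon ⊤) :=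
  isTSaSmall_iff_colon' hfaith hmult N T
end

section
/- Let R be a commutative ring with identity and I an ideal of R. If I is a sa-small ideal of R, then its radical rad(I) = {x ∈ R : x^n ∈ I for some positive integer n} is a sa-small ideal of R. -/
open Submodule

/-- If `I` is a sa-small ideal of `R`, then so is its radical `rad I`. -/
theorem radical_isSaSmall {R : Type*} [CommRing R] [Nontrivial R]
    (I : Ideal R) (h : IsSaSmall (R := R) (M := R) I) :
    IsSaSmall (R := R) (M := R) I.radical := by
  intro J hJ
  apply h J
  rw [← Ideal.radical_eq_top]
  rw [eq_top_iff, ← hJ]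
  exact sup_le (Ideal.radical_mono le_sup_left)
    (le_trans le_sup_right Ideal.le_radical)
end
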